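/- Let R be a commutative reduced clean ring and f : R[x] → R[x] a surjective ring homomorphism. Then the induced map φ₁₁ : R → R, given by φ₁₁(r) = f(r) (which lies in R), is a surjective ring homomorphism from R onto R. -/

import Mathlib

/-!
Units and idempotents of a reduced polynomial ring are constants, so `f` sends every constant
`u + e` of a clean ring to a constant; this defines `g`, and `f` is then the substitution
`p ↦ (p.map g).comp (f X)`. Modulo a prime `J`, the reduction of `f X` has degree one because `X`
lies in the image of `f`, so if `f p = C s` then `p.map g` is constant mod `J` and
`s ≡ g (p.coeff 0)`. As this holds for every prime and the ring is reduced, `s = g (p.coeff 0)`.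
-/

open Polynomial

namespace Polynomial

variable {R S : Type*} [CommRing R] [CommRing S]

theorem eq_C_coeff_zero_of_isUnit [IsReduced R] {p : R[X]} (hp : IsUnit p) :
    p = C (p.coeff 0) :=
  eq_C_of_natDegree_eq_zero <| by
    by_contra h
    exact not_isUnit_of_natDegree_pos_of_isReduced p (Nat.pos_of_ne_zero h) hp

theorem eq_C_coeff_zero_of_isIdempotentElem [IsReduced R] {p : R[X]}
    (hp : IsIdempotentElem p) : p = C (p.coeff 0) := by
  refine eq_C_of_natDegree_eq_zero (by_contra fun h => ?_)
  have hsq : p.leadingCoeff ^ 2 = 0 := by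
    rw [sq, ← coeff_mul_degree_add_degree, hp.eq]
    exact coeff_eq_zero_of_natDegree_lt (by omega)
  exact h (by simp [leadingCoeff_eq_zero.mp (IsReduced.eq_zero _ ⟨2, hsq⟩)])

theorem map_C_eq_C_coeff_zero [IsReduced S]
    (hclean : ∀ a : R, ∃ u e : R, IsUnit u ∧ IsIdempotentElem e ∧ a = u + e)
    (f : R[X] →+* S[X]) (r : R) : f (C r) = C ((f (C r)).coeff 0) := by
  obtain ⟨u, e, hu, he, rfl⟩ := hclean r
  have hu' := eq_C_coeff_zero_of_isUnit ((hu.map C).map f)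
  have he' := eq_C_coeff_zero_of_isIdempotentElem ((he.map C).map f)
  rw [map_add, map_add, hu', he', ← C_add, coeff_C_zero]

theorem apply_eq_map_comp {f : R[X] →+* S[X]} {g : R →+* S} (hfg : ∀ r, f (C r) = C (g r))
    (p : R[X]) : f p = (p.map g).comp (f X) := by
  induction p using Polynomial.induction_on' with
  | add p q hp hq => simp [hp, hq]
  | monomial n a => simp [← C_mul_X_pow_eq_monomial, hfg]

theorem eq_map_coeff_zero_of_comp_eq_C [IsDomain S] {g : R →+* S} {q : S[X]} {p₁ p : R[X]}
    (hX : (p₁.map g).comp q = X) {s : S} (hs : (p.map g).comp q = C s) :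
    s = g (p.coeff 0) := by
  have hq : q.natDegree = 1 := by
    have := congrArg natDegree hX
    rw [natDegree_comp, natDegree_X] at this
    exact Nat.eq_one_of_mul_eq_one_left this
  have hp : (p.map g).natDegree = 0 := by
    simpa [natDegree_comp, hq] using congrArg natDegree hs
  rw [eq_C_of_natDegree_eq_zero hp, C_comp, coeff_map] at hs
  exact (C_injective hs).symm

theorem eq_of_forall_isPrime_mk_eq [IsReduced S] {a b : S}
    (h : ∀ J : Ideal S, J.IsPrime → Ideal.Quotient.mk J a = Ideal.Quotient.mk J b) : a = b := by
  refine sub_eq_zero.mp (IsReduced.eq_zero _ (nilpotent_iff_mem_prime.mpr fun J hJ => ?_))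
  rw [← Ideal.Quotient.eq_zero_iff_mem, map_sub, h J hJ, sub_self]

theorem surjective_of_surjective_of_map_C [IsReduced S] {f : R[X] →+* S[X]} {g : R →+* S}
    (hf : Function.Surjective f) (hfg : ∀ r, f (C r) = C (g r)) : Function.Surjective g := by
  intro s
  obtain ⟨p, hp⟩ := hf (C s)
  obtain ⟨p₁, hp₁⟩ := hf X
  refine ⟨p.coeff 0, (eq_of_forall_isPrime_mk_eq fun J _ => ?_).symm⟩
  have hmod : ∀ {p' : R[X]} {t : S[X]}, f p' = t →
      (p'.map ((Ideal.Quotient.mk J).comp g)).comp ((f X).map (Ideal.Quotient.mk J)) =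
        t.map (Ideal.Quotient.mk J) := fun {p' t} h => by
    rw [← h, apply_eq_map_comp hfg p', map_comp, map_map]
  exact eq_map_coeff_zero_of_comp_eq_C (by simpa using hmod hp₁) (by simpa using hmod hp)

end Polynomial

open Polynomial in
theorem stmt_16 {R : Type*} [CommRing R] [IsReduced R]
    (hclean : ∀ a : R, ∃ u e : R, IsUnit u ∧ IsIdempotentElem e ∧ a = u + e)
    (f : R[X] →+* R[X]) (hf : Function.Surjective f) :
    ∃ g : R →+* R, Function.Surjective g ∧ ∀ r : R, f (C r) = C (g r) := by
  let g : R →+* R := constantCoeff.comp (f.comp C)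
  have hfg : ∀ r, f (C r) = C (g r) := map_C_eq_C_coeff_zero hclean f
  exact ⟨g, surjective_of_surjective_of_map_C hf hfg, hfg⟩
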